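/- arXiv:2206.13713 — 2 statements merged into one kernel-verified Lean document; each statement's English description precedes it below -/
import Mathlib

section
/- Let m > 0 and θ ≥ 0, and define f(r) = r⁴ − 4r² − 4m² log(1 + r^{2θ}) for r ≥ 0. Then there exists a unique δ > 0 such that f(r) < 0 for 0 < r < δ and f(r) ≥ 0 for r ≥ δ; moreover δ > 2. -/
/-!
For `0 < r ≤ 2` the quartic part `r⁴ - 4r²` is nonpositive while the logarithm is positive, so
`f r < 0`. For `r > 0`, `f r` has the sign of `F r - 4m²`, where
`F r = (r⁴ - 4r²) / log (1 + r^{2θ})`, and `F` is strictly increasing on `[2, ∞)`: in the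
derivative, `log (1 + r^{2θ}) > θ` while `r · (log (1 + r^{2θ}))' ≤ 2θ`. As `f 2 < 0` and `f R > 0`
for large `R`, the intermediate value theorem gives a root `δ > 2`, and monotonicity of `F` makes
it the unique sign change.
-/

open Real

noncomputable section

def fChar (m θ r : ℝ) : ℝ :=
  r ^ 4 - 4 * r ^ 2 - 4 * m ^ 2 * Real.log (1 + r ^ (2 * θ))

open Set

section LogOneAddRpow

variable {a r : ℝ}

lemma log_one_add_rpow_pos (hr : 0 < r) : 0 < log (1 + r ^ a) :=
  log_pos (by linarith [rpow_pos_of_pos hr a])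

lemma continuousOn_log_one_add_rpow : ContinuousOn (fun r : ℝ => log (1 + r ^ a)) (Ioi 0) := by
  intro r (hr : 0 < r)
  have h : ContinuousAt (fun s : ℝ => 1 + s ^ a) r :=
    continuousAt_const.add (continuousAt_rpow_const r a (Or.inl hr.ne'))
  exact (h.log (by linarith [rpow_pos_of_pos hr a])).continuousWithinAt

lemma hasDerivAt_log_one_add_rpow (hr : 0 < r) :
    HasDerivAt (fun s : ℝ => log (1 + s ^ a)) (a * r ^ (a - 1) / (1 + r ^ a)) r := by
  have h := ((hasDerivAt_rpow_const (p := a) (Or.inl hr.ne')).const_add 1).log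
    (by linarith [rpow_pos_of_pos hr a])
  simpa using h

lemma mul_rpow_sub_one_div_one_add_rpow_le (ha : 0 ≤ a) (hr : 0 < r) :
    a * r ^ (a - 1) / (1 + r ^ a) ≤ a / r := by
  have hx := rpow_pos_of_pos hr a
  rw [rpow_sub_one hr.ne', div_le_div_iff₀ (by positivity) hr]
  have : a * (r ^ a / r) * r = a * r ^ a := by field_simp
  rw [this]
  nlinarith

lemma half_lt_log_one_add_rpow (ha : 0 ≤ a) (hr : 2 ≤ r) : a / 2 < log (1 + r ^ a) := by
  have hr0 : 0 < r := by linarith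
  have hx := rpow_pos_of_pos hr0 a
  have h2 : 1 / 2 < log r := by
    linarith [log_two_gt_d9, log_le_log two_pos hr]
  calc a / 2 ≤ a * log r := by nlinarith
    _ = log (r ^ a) := (log_rpow hr0 a).symm
    _ < log (1 + r ^ a) := log_lt_log hx (by linarith)

lemma log_one_add_rpow_le (ha : 0 ≤ a) (hr : 1 ≤ r) : log (1 + r ^ a) ≤ 1 + a * r := by
  have hr0 : 0 < r := by linarith
  have hx : 1 ≤ r ^ a := one_le_rpow hr ha
  calc log (1 + r ^ a) ≤ log (2 * r ^ a) := log_le_log (by linarith) (by linarith)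
    _ = log 2 + a * log r := by rw [log_mul two_ne_zero (by positivity), log_rpow hr0]
    _ ≤ 1 + a * r := by
      have := log_le_sub_one_of_pos hr0
      nlinarith [log_two_lt_d9]

end LogOneAddRpow

def charRatio (a r : ℝ) : ℝ := (r ^ 4 - 4 * r ^ 2) / log (1 + r ^ a)

lemma strictMonoOn_charRatio {a : ℝ} (ha : 0 ≤ a) : StrictMonoOn (charRatio a) (Ici 2) := by
  have hpos : ∀ r ∈ Ici (2 : ℝ), 0 < r := fun r hr => by linarith [mem_Ici.mp hr]
  refine strictMonoOn_of_deriv_pos (convex_Ici 2) ?_ fun r hr => ?_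
  · refine ContinuousOn.div (by fun_prop)
      (continuousOn_log_one_add_rpow.mono fun r hr => hpos r hr) fun r hr => ?_
    exact (log_one_add_rpow_pos (hpos r hr)).ne'
  rw [interior_Ici] at hr
  have hr2 : 2 < r := hr
  have hr0 : 0 < r := by linarith
  have hN : HasDerivAt (fun s : ℝ => s ^ 4 - 4 * s ^ 2) (4 * r ^ 3 - 8 * r) r := by
    refine ((hasDerivAt_pow 4 r).sub ((hasDerivAt_pow 2 r).const_mul 4)).congr_deriv ?_
    push_cast
    ring
  set L := log (1 + r ^ a)
  set L' := a * r ^ (a - 1) / (1 + r ^ a)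
  have hL : a / 2 < L := half_lt_log_one_add_rpow ha hr2.le
  have hL' : L' ≤ a / r := mul_rpow_sub_one_div_one_add_rpow_le ha hr0
  have hF : HasDerivAt (charRatio a)
      (((4 * r ^ 3 - 8 * r) * L - (r ^ 4 - 4 * r ^ 2) * L') / L ^ 2) r :=
    hN.div (hasDerivAt_log_one_add_rpow hr0) (log_one_add_rpow_pos hr0).ne'
  rw [hF.deriv]
  refine div_pos ?_ (pow_pos (log_one_add_rpow_pos hr0) 2)
  -- `r L' ≤ a` and `L > a / 2`, so the numerator exceeds `a (2r³ - 4r) - a (r³ - 4r) ≥ 0`.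
  have hg : 0 ≤ r ^ 4 - 4 * r ^ 2 := by
    nlinarith [mul_nonneg (sq_nonneg r) (show 0 ≤ r ^ 2 - 4 by nlinarith)]
  have h1 : (r ^ 4 - 4 * r ^ 2) * L' ≤ a * (r ^ 3 - 4 * r) := by
    calc (r ^ 4 - 4 * r ^ 2) * L' ≤ (r ^ 4 - 4 * r ^ 2) * (a / r) :=
          mul_le_mul_of_nonneg_left hL' hg
      _ = a * (r ^ 3 - 4 * r) := by field_simp
  have h2 : (4 * r ^ 3 - 8 * r) * (a / 2) < (4 * r ^ 3 - 8 * r) * L :=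
    mul_lt_mul_of_pos_left hL (by nlinarith)
  nlinarith [mul_nonneg ha (pow_nonneg hr0.le 3)]

section FChar

variable {m θ r : ℝ}

lemma fChar_neg_of_le_two (hm : m ≠ 0) (hr : 0 < r) (hr2 : r ≤ 2) : fChar m θ r < 0 := by
  have hL := log_one_add_rpow_pos (a := 2 * θ) hr
  have hg : r ^ 4 - 4 * r ^ 2 ≤ 0 := by
    nlinarith [mul_nonneg (sq_nonneg r) (show 0 ≤ 4 - r ^ 2 by nlinarith)]
  have : 0 < 4 * m ^ 2 * log (1 + r ^ (2 * θ)) := by positivity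
  unfold fChar
  linarith

lemma fChar_neg_iff (hr : 0 < r) : fChar m θ r < 0 ↔ charRatio (2 * θ) r < 4 * m ^ 2 := by
  rw [charRatio, div_lt_iff₀ (log_one_add_rpow_pos hr), fChar, sub_neg]

lemma continuousOn_fChar : ContinuousOn (fChar m θ) (Ioi 0) :=
  ((continuous_pow 4).sub (continuous_const.mul (continuous_pow 2))).continuousOn.sub
    (continuousOn_const.mul continuousOn_log_one_add_rpow)

lemma exists_fChar_pos (hθ : 0 ≤ θ) : ∃ R, 2 < R ∧ 0 < fChar m θ R := by
  -- `log (1 + R^{2θ}) ≤ 1 + 2θR`, so it suffices that `4m²(1 + 2θR) ≤ R + R² < R⁴ - 4R²`.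
  set R := 3 + 4 * m ^ 2 + 8 * m ^ 2 * θ
  have hR : 3 ≤ R := by nlinarith [sq_nonneg m]
  have hL := log_one_add_rpow_le (a := 2 * θ) (by linarith) (show 1 ≤ R by linarith)
  have h1 : 4 * m ^ 2 * log (1 + R ^ (2 * θ)) ≤ 4 * m ^ 2 * (1 + 2 * θ * R) :=
    mul_le_mul_of_nonneg_left hL (by positivity)
  have h2 : 8 * m ^ 2 * θ * R ≤ R * R := by
    apply mul_le_mul_of_nonneg_right _ (by linarith); nlinarith [sq_nonneg m]
  have h3 : 4 * m ^ 2 ≤ R := by nlinarith [sq_nonneg m]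
  have h4 : 5 * R ^ 2 ≤ R ^ 4 - 4 * R ^ 2 := by
    nlinarith [mul_nonneg (sq_nonneg R) (show 0 ≤ R ^ 2 - 9 by nlinarith)]
  refine ⟨R, by linarith, ?_⟩
  unfold fChar
  nlinarith

lemma fChar_neg_iff_lt_of_root (hm : m ≠ 0) (hθ : 0 ≤ θ) {δ : ℝ} (hδ : 2 < δ)
    (hroot : fChar m θ δ = 0) (hr : 0 < r) : fChar m θ r < 0 ↔ r < δ := by
  rcases le_or_gt r 2 with hr2 | hr2
  · exact iff_of_true (fChar_neg_of_le_two hm hr hr2) (by linarith)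
  have hδ' : charRatio (2 * θ) δ = 4 * m ^ 2 := by
    rw [charRatio, div_eq_iff (log_one_add_rpow_pos (by linarith)).ne']
    rw [fChar] at hroot
    linarith
  rw [fChar_neg_iff hr, ← hδ']
  exact (strictMonoOn_charRatio (by linarith)).lt_iff_lt (mem_Ici.2 hr2.le) (mem_Ici.2 hδ.le)

lemma exists_root_fChar_gt_two (hm : m ≠ 0) (hθ : 0 ≤ θ) :
    ∃ δ, 2 < δ ∧ fChar m θ δ = 0 := by
  obtain ⟨R, hR, hfR⟩ := exists_fChar_pos (m := m) hθ
  have hf2 : fChar m θ 2 < 0 := fChar_neg_of_le_two hm two_pos le_rfl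
  obtain ⟨δ, hδ, hroot⟩ := intermediate_value_Icc hR.le
    (continuousOn_fChar.mono fun r hr => (two_pos.trans_le hr.1 : 0 < r)) ⟨hf2.le, hfR.le⟩
  refine ⟨δ, lt_of_le_of_ne hδ.1 ?_, hroot⟩
  rintro rfl
  exact hf2.ne hroot

end FChar

def IsSignChangePoint (f : ℝ → ℝ) (δ : ℝ) : Prop :=
  0 < δ ∧ (∀ r, 0 < r → r < δ → f r < 0) ∧ ∀ r, δ ≤ r → 0 ≤ f r

lemma IsSignChangePoint.eq {f : ℝ → ℝ} {δ δ' : ℝ} (h : IsSignChangePoint f δ)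
    (h' : IsSignChangePoint f δ') : δ = δ' := by
  obtain ⟨hδ, hneg, hnonneg⟩ := h
  obtain ⟨hδ', hneg', hnonneg'⟩ := h'
  by_contra hne
  rcases lt_or_gt_of_ne hne with hlt | hlt
  · exact (hneg' δ hδ hlt).not_ge (hnonneg δ le_rfl)
  · exact (hneg δ' hδ' hlt).not_ge (hnonneg' δ' le_rfl)

lemma exists_isSignChangePoint_fChar {m θ : ℝ} (hm : m ≠ 0) (hθ : 0 ≤ θ) :
    ∃ δ, 2 < δ ∧ IsSignChangePoint (fChar m θ) δ := by
  obtain ⟨δ, hδ, hroot⟩ := exists_root_fChar_gt_two hm hθ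
  have hsign r (hr : 0 < r) := fChar_neg_iff_lt_of_root hm hθ hδ hroot hr
  refine ⟨δ, hδ, by linarith, fun r hr hrδ => (hsign r hr).2 hrδ, fun r hr => ?_⟩
  exact not_lt.1 fun hneg => ((hsign r (by linarith)).1 hneg).not_ge hr

/-- unique sign-changing point `δ` of `f`, and `δ > 2`. -/
theorem stmt6 (m θ : ℝ) (hm : 0 < m) (hθ : 0 ≤ θ) :
    ∃ δ : ℝ, 2 < δ ∧ 0 < δ ∧
      (∀ r : ℝ, 0 < r → r < δ → fChar m θ r < 0) ∧
      (∀ r : ℝ, δ ≤ r → 0 ≤ fChar m θ r) ∧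
      ∀ δ' : ℝ, 0 < δ' → (∀ r : ℝ, 0 < r → r < δ' → fChar m θ r < 0) →
        (∀ r : ℝ, δ' ≤ r → 0 ≤ fChar m θ r) → δ' = δ := by
  obtain ⟨δ, hδ2, hδ⟩ := exists_isSignChangePoint_fChar hm.ne' hθ
  exact ⟨δ, hδ2, hδ.1, hδ.2.1, hδ.2.2,
    fun δ' h0 hneg hnonneg => IsSignChangePoint.eq ⟨h0, hneg, hnonneg⟩ hδ⟩

end
end

section
/- There exist a constant C > 0 and a time t₀ > 1 such that for all t ≥ t₀, ∫₀^∞ e^{-w²} sin²(√t · w) / w dw ≥ C log t. -/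
/-!
The integrand is nonnegative, so it suffices to integrate over `(1/√t, 1]`. There the Gaussian
factor is at least `e⁻¹`, and the substitution `u = √t w` turns the remaining integral into
`∫₁^√t sin² u / u du`. Since `sin² u = (1 - cos 2u) / 2`, this is `(log √t) / 2` minus half of
`∫₁^√t cos 2u / u du`, an oscillatory integral that integration by parts bounds by `3/2`.
-/

open MeasureTheory Real Set intervalIntegral

theorem sin_sq_le_abs (x : ℝ) : sin x ^ 2 ≤ |x| :=
  calc sin x ^ 2 = |sin x| * |sin x| := by rw [abs_mul_abs_self, sq]
    _ ≤ |x| * 1 := mul_le_mul abs_sin_le_abs (abs_sin_le_one x) (abs_nonneg _) (abs_nonneg _)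
    _ = |x| := mul_one _

theorem integrableOn_exp_neg_sq_mul_sin_sq_div (a : ℝ) :
    IntegrableOn (fun w => exp (-w ^ 2) * sin (a * w) ^ 2 / w) (Ioi 0) := by
  refine Integrable.mono' ((integrable_exp_neg_mul_sq one_pos).const_mul |a|).integrableOn
    (by fun_prop : Measurable _).aestronglyMeasurable ?_
  filter_upwards [self_mem_ae_restrict measurableSet_Ioi] with w (hw : 0 < w)
  rw [norm_of_nonneg (by positivity), mul_div_assoc, mul_comm |a|, neg_one_mul]
  gcongr
  rw [div_le_iff₀ hw]
  calc sin (a * w) ^ 2 ≤ |a * w| := sin_sq_le_abs _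
    _ = |a| * w := by rw [abs_mul, abs_of_pos hw]

theorem integral_comp_mul_div_self (g : ℝ → ℝ) {a : ℝ} (ha : a ≠ 0) (b c : ℝ) :
    ∫ x in b..c, g (a * x) / x = ∫ u in a * b..a * c, g u / u := by
  have h : ∀ x, g (a * x) / x = a * (g (a * x) / (a * x)) := fun x => by
    rw [mul_div_assoc', mul_div_mul_left _ _ ha]
  simp_rw [h, intervalIntegral.integral_const_mul,
    intervalIntegral.integral_comp_mul_left (fun u => g u / u) ha, smul_eq_mul,
    mul_inv_cancel_left₀ ha]

theorem abs_inv_mul_sin_two_mul_div_two_le {x : ℝ} (hx : 1 ≤ x) :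
    |x⁻¹ * (sin (2 * x) / 2)| ≤ 1 / 2 := by
  rw [abs_mul, abs_div, abs_inv, abs_of_pos (by linarith), abs_two]
  have := abs_sin_le_one (2 * x)
  have : x⁻¹ ≤ 1 := inv_le_one_of_one_le₀ hx
  have : 0 ≤ x⁻¹ := by positivity
  nlinarith

theorem abs_integral_cos_two_mul_div_le {a : ℝ} (ha : 1 ≤ a) :
    |∫ x in (1 : ℝ)..a, cos (2 * x) / x| ≤ 3 / 2 := by
  have hpos : ∀ x ∈ uIcc 1 a, 0 < x := fun x hx => by
    rw [uIcc_of_le ha] at hx; linarith [hx.1]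
  have hu : ∀ x ∈ uIcc 1 a, HasDerivAt (fun y => y⁻¹) (-(x ^ 2)⁻¹) x := fun x hx =>
    hasDerivAt_inv (hpos x hx).ne'
  have hv : ∀ x ∈ uIcc 1 a, HasDerivAt (fun y => sin (2 * y) / 2) (cos (2 * x)) x := fun x _ => by
    simpa using (((hasDerivAt_id x).const_mul 2).sin).div_const 2
  have hu' : IntervalIntegrable (fun x => -(x ^ 2)⁻¹) volume 1 a :=
    (ContinuousOn.neg <| ContinuousOn.inv₀ (by fun_prop) fun x hx =>
      (pow_pos (hpos x hx) 2).ne').intervalIntegrable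
  have hrest : ‖∫ x in (1 : ℝ)..a, -(x ^ 2)⁻¹ * (sin (2 * x) / 2)‖ ≤ 1 / 2 :=
    -- the majorant `(x²)⁻¹ / 2`, written so that `hu` integrates it
    calc ‖∫ x in (1 : ℝ)..a, -(x ^ 2)⁻¹ * (sin (2 * x) / 2)‖
        ≤ ∫ x in (1 : ℝ)..a, -(x ^ 2)⁻¹ * (-1 / 2) := by
          refine intervalIntegral.norm_integral_le_of_norm_le ha
            (Filter.Eventually.of_forall fun x hx => ?_) (hu'.mul_const _)
          rw [norm_mul, norm_neg, norm_div, Real.norm_two, norm_inv, norm_pow, Real.norm_eq_abs,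
            Real.norm_eq_abs, sq_abs]
          have := abs_sin_le_one (2 * x)
          have : 0 ≤ (x ^ 2)⁻¹ := by positivity
          nlinarith
      _ = (1 - a⁻¹) / 2 := by
          rw [intervalIntegral.integral_mul_const, integral_eq_sub_of_hasDerivAt hu hu']; ring
      _ ≤ 1 / 2 := by linarith [inv_nonneg.2 (zero_le_one.trans ha)]
  rw [integral_congr (g := fun x => x⁻¹ * cos (2 * x)) fun x _ => div_eq_inv_mul _ _,
    intervalIntegral.integral_mul_deriv_eq_deriv_mul hu hv hu'
      ((by fun_prop : Continuous fun x => cos (2 * x)).intervalIntegrable 1 a)]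
  calc _ ≤ |a⁻¹ * (sin (2 * a) / 2)| + |1⁻¹ * (sin (2 * 1) / 2)|
        + |∫ x in (1 : ℝ)..a, -(x ^ 2)⁻¹ * (sin (2 * x) / 2)| :=
          (abs_sub _ _).trans (by gcongr; exact abs_sub _ _)
    _ ≤ 1 / 2 + 1 / 2 + 1 / 2 := by gcongr; exacts [abs_inv_mul_sin_two_mul_div_two_le ha,
      abs_inv_mul_sin_two_mul_div_two_le le_rfl, hrest]
    _ = 3 / 2 := by norm_num

theorem log_div_two_sub_le_integral_sin_sq_div {a : ℝ} (ha : 1 ≤ a) :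
    log a / 2 - 3 / 4 ≤ ∫ u in (1 : ℝ)..a, sin u ^ 2 / u := by
  have hne : ∀ x ∈ uIcc 1 a, x ≠ 0 := fun x hx => by
    rw [uIcc_of_le ha] at hx; linarith [hx.1]
  have hsplit : ∫ u in (1 : ℝ)..a, sin u ^ 2 / u =
      (∫ u in (1 : ℝ)..a, u⁻¹) / 2 - (∫ u in (1 : ℝ)..a, cos (2 * u) / u) / 2 := by
    rw [← intervalIntegral.integral_div, ← intervalIntegral.integral_div,
      ← intervalIntegral.integral_sub]
    · refine integral_congr fun u _ => ?_
      simp only [sin_sq_eq_half_sub]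
      ring
    · exact (intervalIntegrable_inv hne continuousOn_id).div_const 2
    · exact (ContinuousOn.intervalIntegrable (by fun_prop (disch := exact hne))).div_const 2
  rw [hsplit, integral_inv fun h => hne 0 h rfl, div_one]
  linarith [(abs_le.1 (abs_integral_cos_two_mul_div_le ha)).2]

theorem exp_neg_one_mul_integral_sin_sq_div_le {a : ℝ} (ha : 1 ≤ a) :
    exp (-1) * ∫ u in (1 : ℝ)..a, sin u ^ 2 / u ≤
      ∫ w in Ioi 0, exp (-w ^ 2) * sin (a * w) ^ 2 / w := by
  have ha0 : 0 < a := by linarith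
  have hinv : a⁻¹ ≤ 1 := inv_le_one_of_one_le₀ ha
  have hinv0 : 0 < a⁻¹ := inv_pos.2 ha0
  have hne : ∀ w ∈ uIcc a⁻¹ 1, w ≠ 0 := fun w hw => by
    rw [uIcc_of_le hinv] at hw; exact (hinv0.trans_le hw.1).ne'
  calc exp (-1) * ∫ u in (1 : ℝ)..a, sin u ^ 2 / u
      = ∫ w in a⁻¹..1, exp (-1) * (sin (a * w) ^ 2 / w) := by
        rw [intervalIntegral.integral_const_mul,
          integral_comp_mul_div_self (fun u => sin u ^ 2) ha0.ne', mul_inv_cancel₀ ha0.ne', mul_one]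
    _ ≤ ∫ w in a⁻¹..1, exp (-w ^ 2) * sin (a * w) ^ 2 / w := by
        refine integral_mono_on hinv
          (ContinuousOn.intervalIntegrable (by fun_prop (disch := exact hne)))
          (ContinuousOn.intervalIntegrable (by fun_prop (disch := exact hne))) fun w hw => ?_
        have hw0 : 0 < w := hinv0.trans_le hw.1
        rw [mul_div_assoc]
        gcongr
        exact pow_le_one₀ hw0.le hw.2
    _ = ∫ w in Ioc a⁻¹ 1, exp (-w ^ 2) * sin (a * w) ^ 2 / w := integral_of_le hinv
    _ ≤ ∫ w in Ioi 0, exp (-w ^ 2) * sin (a * w) ^ 2 / w := by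
        refine setIntegral_mono_set (integrableOn_exp_neg_sq_mul_sin_sq_div a) ?_
          (Ioc_subset_Ioi_self.trans (Ioi_subset_Ioi hinv0.le)).eventuallyLE
        filter_upwards [self_mem_ae_restrict measurableSet_Ioi] with w (hw : 0 < w)
        positivity

/-- Lemma 6.6: logarithmic lower bound for the oscillatory integral. -/
theorem stmt18 :
    ∃ C t₀ : ℝ, 0 < C ∧ 1 < t₀ ∧
      ∀ t : ℝ, t₀ ≤ t →
        C * Real.log t ≤
          ∫ w in Set.Ioi (0 : ℝ),
            Real.exp (-w ^ 2) * Real.sin (Real.sqrt t * w) ^ 2 / w := by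
  refine ⟨exp (-1) / 8, exp 6, by positivity, one_lt_exp_iff.2 (by norm_num), fun t ht => ?_⟩
  have ht0 : 0 < t := (exp_pos 6).trans_le ht
  have hlog : 6 ≤ log t := (le_log_iff_exp_le ht0).2 ht
  have ha : 1 ≤ √t := one_le_sqrt.2 ((one_le_exp (by norm_num)).trans ht)
  calc exp (-1) / 8 * log t ≤ exp (-1) * (log √t / 2 - 3 / 4) := by
        rw [log_sqrt ht0.le]; nlinarith [exp_pos (-1)]
    _ ≤ exp (-1) * ∫ u in (1 : ℝ)..√t, sin u ^ 2 / u := by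
        gcongr; exact log_div_two_sub_le_integral_sin_sq_div ha
    _ ≤ _ := exp_neg_one_mul_integral_sin_sq_div_le ha
end
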